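/- Let Λ be a commutative ring, let G = SL2(E), U = SL2(O_E), U' = diag(1, π)·SL2(O_E)·diag(1, π)^{−1}, and Γ_0 = U ∩ U'. For an open subgroup H ≤ G, let Λ[H\G] denote the Λ-module of finitely supported functions H\G → Λ, with G acting by right translation on the cosets. Then the sequence of Λ[G]-modules 0 → Λ[Γ_0\G] →^δ Λ[U\G] ⊕ Λ[U'\G] →^Σ Λ → 0 is exact, where δ sends the indicator function of a coset Γ_0 g to (indicator of U g, −(indicator of U' g)), Σ sends a pair of finitely supported functions to the sum of all of their values, and G acts trivially on Λ. (This is the augmented cellular chain complex of the Bruhat–Tits tree of SL2(E), giving a resolution of the trivial module Λ by compactly induced modules.) -/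

import Mathlib

noncomputable section

open Matrix

/-- A surjective discrete (rank-one) valuation on a field `E`, written additively.
This is the algebraic structure of a nonarchimedean local field used in the statements. -/
structure DiscreteVal (E : Type) [Field E] : Type where
  v : E → ℤ
  v_mul : ∀ x y : E, x ≠ 0 → y ≠ 0 → v (x * y) = v x + v y
  v_min_le_add : ∀ x y : E, x ≠ 0 → y ≠ 0 → x + y ≠ 0 → min (v x) (v y) ≤ v (x + y)
  surj : ∀ n : ℤ, ∃ x : E, x ≠ 0 ∧ v x = n

namespace DiscreteVal

variable {E : Type} [Field E]

/-- The valuation ring `O_E = {x : x = 0 or v x ≥ 0}`. -/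
def O (ν : DiscreteVal E) : Set E := {x : E | x = 0 ∨ 0 ≤ ν.v x}

/-- `π` is a uniformizer: `π ≠ 0` and `v π = 1`. -/
def IsUniformizer (ν : DiscreteVal E) (π : E) : Prop := π ≠ 0 ∧ ν.v π = 1

/-- The set `π^m · O_E` for `m : ℤ`. -/
def ball (ν : DiscreteVal E) (π : E) (m : ℤ) : Set E :=
  {y : E | ∃ z ∈ ν.O, y = π ^ m * z}

end DiscreteVal

section ProjLine

variable {E : Type} [Field E]

/-- The point `[a : b]` of the projective line over `E`. -/
def projPt (a b : E) (h : a ≠ 0 ∨ b ≠ 0) : Projectivization E (Fin 2 → E) :=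
  Projectivization.mk E ![a, b] (by
    intro hc
    rcases h with h | h
    · exact h (by simpa using congrFun hc 0)
    · exact h (by simpa using congrFun hc 1))

/-- The point `∞ = [0 : 1]`. -/
def inftyPt (E : Type) [Field E] : Projectivization E (Fin 2 → E) :=
  projPt 0 1 (Or.inr one_ne_zero)

/-- The point `[1 : t]`. -/
def onePt (t : E) : Projectivization E (Fin 2 → E) :=
  projPt 1 t (Or.inl one_ne_zero)

theorem vecMulLinear_injective (g : SpecialLinearGroup (Fin 2) E) :
    Function.Injective (g.1.vecMulLinear) := by
  intro x y hxy
  have h1 : x ᵥ* g.1 = y ᵥ* g.1 := by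
    simpa [Matrix.vecMulLinear_apply] using hxy
  have h3 : g.1 * (g⁻¹).1 = 1 := by
    rw [← Matrix.SpecialLinearGroup.coe_mul, mul_inv_cancel, Matrix.SpecialLinearGroup.coe_one]
  calc x = x ᵥ* (g.1 * (g⁻¹).1) := by rw [h3, Matrix.vecMul_one]
    _ = (x ᵥ* g.1) ᵥ* (g⁻¹).1 := (Matrix.vecMul_vecMul x g.1 (g⁻¹).1).symm
    _ = (y ᵥ* g.1) ᵥ* (g⁻¹).1 := by rw [h1]
    _ = y ᵥ* (g.1 * (g⁻¹).1) := Matrix.vecMul_vecMul y g.1 (g⁻¹).1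
    _ = y := by rw [h3, Matrix.vecMul_one]

/-- The right action `[w] · g := [w ᵥ* g]` of `SL₂(E)` on the projective line
(rows vectors times matrix). -/
def ract (x : Projectivization E (Fin 2 → E)) (g : SpecialLinearGroup (Fin 2) E) :
    Projectivization E (Fin 2 → E) :=
  Projectivization.map (g.1.vecMulLinear) (vecMulLinear_injective g) x

/-- The orbit of `x` under a set `Γ` of elements of `SL₂(E)` (acting on the right). -/
def orbitOf (Γ : Set (SpecialLinearGroup (Fin 2) E))
    (x : Projectivization E (Fin 2 → E)) : Set (Projectivization E (Fin 2 → E)) :=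
  {y | ∃ g ∈ Γ, y = ract x g}

variable (ν : DiscreteVal E) (π : E)

/-- The principal congruence subgroup `Γ_k` of level `k` (as a subset of `SL₂(E)`):
integral matrices congruent to the identity modulo `π^k`. -/
def congrSub (k : ℕ) : Set (SpecialLinearGroup (Fin 2) E) :=
  {g | ∀ i j, g.1 i j - (1 : Matrix (Fin 2) (Fin 2) E) i j ∈ ν.ball π (k : ℤ)}

/-- The maximal compact subgroup `U = SL₂(O_E)` (as a subset of `SL₂(E)`). -/
def slIntegral : Set (SpecialLinearGroup (Fin 2) E) :=
  {g | ∀ i j, g.1 i j ∈ ν.O}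

/-- The Iwahori subgroup `Γ₀` (as a subset): integral matrices whose
lower-left entry lies in `πO_E`. -/
def iwahori : Set (SpecialLinearGroup (Fin 2) E) :=
  {g | (∀ i j, g.1 i j ∈ ν.O) ∧ g.1 1 0 ∈ ν.ball π 1}

/-- The subgroup `U' = diag(1,π) SL₂(O_E) diag(1,π)⁻¹` (as a subset), described
by entry conditions. -/
def slConj : Set (SpecialLinearGroup (Fin 2) E) :=
  {g | g.1 0 0 ∈ ν.O ∧ g.1 1 1 ∈ ν.O ∧ g.1 0 1 ∈ ν.ball π (-1) ∧ g.1 1 0 ∈ ν.ball π 1}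

end ProjLine

/-!
STATEMENT 12: Let `Λ` be a commutative ring, `G = SL₂(E)`, `U = SL₂(O_E)`,
`U' = diag(1,π)·SL₂(O_E)·diag(1,π)⁻¹` and `Γ₀ = U ∩ U'`.  For an open subgroup
`H ≤ G` let `Λ[H\G]` be the `Λ`-module of finitely supported functions on `H\G`,
with `G` acting by right translation.  Then the sequence
`0 → Λ[Γ₀\G] →δ Λ[U\G] ⊕ Λ[U'\G] →Σ Λ → 0`
is exact, where `δ` sends the indicator of the coset `Γ₀g` to
`(indicator of Ug, −(indicator of U'g))`, `Σ` is the sum of all values, and `G`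
acts trivially on `Λ`; moreover `δ` and `Σ` are `G`-equivariant.
(This is the augmented cellular chain complex of the Bruhat–Tits tree.)
-/

section Statement12

variable {E : Type} [Field E]

/-- Right-coset equivalence for a subset `H`: `g ~ g'` iff `g' = h g`, `h ∈ H`. -/
def cosetRel (H : Set (SpecialLinearGroup (Fin 2) E))
    (g g' : SpecialLinearGroup (Fin 2) E) : Prop :=
  ∃ h ∈ H, g' = h * g

/-- The right coset space `H\G`. -/
def CosetSpace (H : Set (SpecialLinearGroup (Fin 2) E)) : Type :=
  Quot (cosetRel H)

/-- The coset `Hg`. -/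
def cosetMk (H : Set (SpecialLinearGroup (Fin 2) E))
    (g : SpecialLinearGroup (Fin 2) E) : CosetSpace H :=
  Quot.mk (cosetRel H) g

/-- Right translation of `G` on `H\G`. -/
def cosetTrans (H : Set (SpecialLinearGroup (Fin 2) E))
    (g₀ : SpecialLinearGroup (Fin 2) E) : CosetSpace H → CosetSpace H :=
  Quot.map (fun g => g * g₀) (by
    rintro a b ⟨h, hh, rfl⟩
    exact ⟨h, hh, mul_assoc _ _ _⟩)

/-- The right translation action of `G` on `Λ[H\G]`. -/
def transF (Λ : Type) [CommRing Λ] (H : Set (SpecialLinearGroup (Fin 2) E))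
    (g₀ : SpecialLinearGroup (Fin 2) E) :
    (CosetSpace H →₀ Λ) → (CosetSpace H →₀ Λ) :=
  Finsupp.mapDomain (cosetTrans H g₀)

/-- Projection `Γ₀\G → U\G` (using `Γ₀ = U ∩ U'`). -/
def projToU (ν : DiscreteVal E) (π : E) :
    CosetSpace (slIntegral ν ∩ slConj ν π) → CosetSpace (slIntegral ν) :=
  Quot.map id (by rintro a b ⟨h, hh, rfl⟩; exact ⟨h, hh.1, rfl⟩)

/-- Projection `Γ₀\G → U'\G`. -/
def projToU' (ν : DiscreteVal E) (π : E) :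
    CosetSpace (slIntegral ν ∩ slConj ν π) → CosetSpace (slConj ν π) :=
  Quot.map id (by rintro a b ⟨h, hh, rfl⟩; exact ⟨h, hh.2, rfl⟩)

/-- The boundary map `δ : Λ[Γ₀\G] → Λ[U\G] ⊕ Λ[U'\G]`, the `Λ`-linear extension of
`indicator of Γ₀g ↦ (indicator of Ug, −(indicator of U'g))`. -/
def deltaMap (Λ : Type) [CommRing Λ] (ν : DiscreteVal E) (π : E) :
    (CosetSpace (slIntegral ν ∩ slConj ν π) →₀ Λ) →
      (CosetSpace (slIntegral ν) →₀ Λ) × (CosetSpace (slConj ν π) →₀ Λ) :=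
  fun f => (Finsupp.mapDomain (projToU ν π) f, - Finsupp.mapDomain (projToU' ν π) f)

/-- The augmentation `Σ : Λ[U\G] ⊕ Λ[U'\G] → Λ`, the sum of all values. -/
def sigmaMap (Λ : Type) [CommRing Λ] (ν : DiscreteVal E) (π : E) :
    (CosetSpace (slIntegral ν) →₀ Λ) × (CosetSpace (slConj ν π) →₀ Λ) → Λ :=
  fun x => (x.1.sum fun _ a => a) + (x.2.sum fun _ a => a)

/-!
`δ` is the boundary map of the Bruhat–Tits tree, whose vertices are the cosets `U g`, `U' g` and
whose edges are the cosets `Γ₀ g`.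

Exactness at `Λ[Γ₀\G]` says the tree has no cycles. If `δ f = 0` with `f ≠ 0`, every edge in
the support of `f` shares each of its vertices with another edge of the support, so there is an
infinite walk in the finite support whose representatives change alternately by some
`u ∈ U \ Γ₀` and some `u' ∈ U' \ Γ₀`. Here `u₁₀` is a unit and `v(u'₀₁) = -1`, so along the
walk the valuation of the first coordinate of `g e₁` drops by exactly one every two steps and
the walk never repeats, which is absurd.

Exactness in the middle says the tree is connected. `G` is generated by `U ∪ U'`: every
transvection is conjugate to an integral one by a power of `diag(π⁻¹, π) ∈ ⟨U ∪ U'⟩`. Hence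
every vertex `U g` is homologous to the base vertex `U`, and every chain `x` to `Σ x` times it.
-/

namespace DiscreteVal

variable (ν : DiscreteVal E)

lemma v_one : ν.v 1 = 0 := by
  have := ν.v_mul 1 1 one_ne_zero one_ne_zero
  rwa [mul_one, left_eq_add] at this

open Classical in
def toAddValuation : AddValuation E (WithTop ℤ) :=
  AddValuation.of (fun x => if x = 0 then ⊤ else (ν.v x : WithTop ℤ)) (by simp)
    (by simp [v_one])
    (fun x y => by
      by_cases hx : x = 0; · simp [hx]
      by_cases hy : y = 0; · simp [hy]
      by_cases hxy : x + y = 0; · simp [hxy]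
      simpa [hx, hy, hxy] using ν.v_min_le_add x y hx hy hxy)
    (fun x y => by
      by_cases hx : x = 0; · simp [hx]
      by_cases hy : y = 0; · simp [hy]
      simp [hx, hy, ν.v_mul x y hx hy])

variable {ν}

lemma toAddValuation_of_ne_zero {x : E} (hx : x ≠ 0) : ν.toAddValuation x = ν.v x := by
  simp [toAddValuation, hx]

lemma mem_O_iff {x : E} : x ∈ ν.O ↔ 0 ≤ ν.toAddValuation x := by
  rcases eq_or_ne x 0 with rfl | hx
  · simp [O]
  · simp [O, hx, toAddValuation_of_ne_zero hx]

variable (ν) in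
def integers : Subring E where
  carrier := ν.O
  zero_mem' := Or.inl rfl
  one_mem' := mem_O_iff.2 (by simp)
  add_mem' hx hy := mem_O_iff.2 <|
    AddValuation.map_le_add _ (mem_O_iff.1 hx) (mem_O_iff.1 hy)
  mul_mem' hx hy := mem_O_iff.2 <| by
    rw [AddValuation.map_mul]; exact add_nonneg (mem_O_iff.1 hx) (mem_O_iff.1 hy)
  neg_mem' hx := mem_O_iff.2 <| by rw [AddValuation.map_neg]; exact mem_O_iff.1 hx

lemma zero_mem_O : (0 : E) ∈ ν.O := ν.integers.zero_mem

lemma one_mem_O : (1 : E) ∈ ν.O := ν.integers.one_mem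

lemma mem_ball_iff {π : E} (hπ : π ≠ 0) {m : ℤ} {x : E} :
    x ∈ ν.ball π m ↔ π ^ (-m) * x ∈ ν.O := by
  refine ⟨?_, fun hx => ⟨_, hx, ?_⟩⟩
  · rintro ⟨z, hz, rfl⟩
    rwa [← mul_assoc, ← zpow_add₀ hπ, neg_add_cancel, zpow_zero, one_mul]
  · rw [← mul_assoc, ← zpow_add₀ hπ, add_neg_cancel, zpow_zero, one_mul]

namespace IsUniformizer

variable {π : E} (hπ : ν.IsUniformizer π)
include hπ

lemma toAddValuation_eq_one : ν.toAddValuation π = 1 := by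
  rw [toAddValuation_of_ne_zero hπ.1, hπ.2]
  rfl

lemma toAddValuation_zpow (m : ℤ) : ν.toAddValuation (π ^ m) = m := by
  obtain ⟨n, rfl | rfl⟩ := Int.eq_nat_or_neg m
  · rw [zpow_natCast, AddValuation.map_pow, hπ.toAddValuation_eq_one, nsmul_one]
    rfl
  · rw [_root_.zpow_neg, zpow_natCast, AddValuation.map_inv, AddValuation.map_pow,
      hπ.toAddValuation_eq_one, nsmul_one]
    exact (WithTop.LinearOrderedAddCommGroup.coe_neg (n : ℤ)).symm

lemma mem_ball_iff_le {m : ℤ} {x : E} :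
    x ∈ ν.ball π m ↔ (m : WithTop ℤ) ≤ ν.toAddValuation x := by
  rw [mem_ball_iff hπ.1, mem_O_iff, AddValuation.map_mul, hπ.toAddValuation_zpow]
  induction ν.toAddValuation x using WithTop.recTopCoe with
  | top => simp
  | coe k => norm_cast; omega

lemma exists_even_pow_mul_mem_O (x : E) : ∃ k : ℕ, π ^ (2 * k) * x ∈ ν.O := by
  refine ⟨(ν.v x).natAbs, mem_O_iff.2 ?_⟩
  rcases eq_or_ne x 0 with rfl | hx
  · simp
  rw [AddValuation.map_mul, AddValuation.map_pow, hπ.toAddValuation_eq_one,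
    toAddValuation_of_ne_zero hx, nsmul_one, ← WithTop.coe_natCast, ← WithTop.coe_add,
    ← WithTop.coe_zero, WithTop.coe_le_coe]
  omega

end IsUniformizer

end DiscreteVal

namespace Matrix.SpecialLinearGroup

variable {n R : Type*} [Fintype n] [DecidableEq n] [CommRing R]

lemma mem_range_map_subtype_iff (S : Subring R) (g : SpecialLinearGroup n R) :
    g ∈ (map S.subtype).range ↔ ∀ i j, g i j ∈ S := by
  refine ⟨?_, fun hg => ?_⟩
  · rintro ⟨h, rfl⟩ i j
    exact (h i j).2
  · let h : Matrix n n S := fun i j => ⟨g i j, hg i j⟩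
    have hdet : h.det = 1 := Subtype.val_injective <| (RingHom.map_det S.subtype h).trans g.2
    exact ⟨⟨h, hdet⟩, Subtype.ext rfl⟩

def conjByDiagonal (d : n → Rˣ) : SpecialLinearGroup n R →* SpecialLinearGroup n R where
  toFun g := ⟨diagonal (fun i => (((d i)⁻¹ : Rˣ) : R)) * g * diagonal (fun i => (d i : R)), by
    simp [det_mul, mul_comm, ← Finset.prod_mul_distrib]⟩
  map_one' := Subtype.ext <| by simp [diagonal_mul_diagonal]
  map_mul' := fun ⟨A, _⟩ ⟨B, _⟩ => Subtype.ext <| by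
    set D := diagonal (fun i => (d i : R))
    set D' := diagonal (fun i => (((d i)⁻¹ : Rˣ) : R))
    have hD : D * D' = 1 := by simp [D, D', diagonal_mul_diagonal]
    change D' * (A * B) * D = (D' * A * D) * (D' * B * D)
    calc D' * (A * B) * D = D' * A * (D * D') * B * D := by
          rw [hD, Matrix.mul_one, Matrix.mul_assoc D' A B]
      _ = _ := by simp only [Matrix.mul_assoc]

lemma conjByDiagonal_apply (d : n → Rˣ) (g : SpecialLinearGroup n R) (i j : n) :
    conjByDiagonal d g i j = (((d i)⁻¹ : Rˣ) : R) * g i j * d j := by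
  change (diagonal (fun i => (((d i)⁻¹ : Rˣ) : R)) * g.1 * diagonal (fun i => (d i : R))) i j = _
  rw [mul_diagonal, diagonal_mul]

lemma smul_apply_fin_two (g : SpecialLinearGroup (Fin 2) R) (x : Fin 2 → R) (i : Fin 2) :
    (g • x) i = g i 0 * x 0 + g i 1 * x 1 := by
  rw [SpecialLinearGroup.smul_def]
  simp [mulVec, dotProduct, Fin.sum_univ_two]

variable {F : Type*} [Field F]

lemma diag2_mul_transvection_zero_one_mul_inv {a : F} (ha : a ≠ 0) (c : F) :
    diag2 a ha * transvection zero_ne_one c * (diag2 a ha)⁻¹ =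
      transvection zero_ne_one (a ^ 2 * c) := by
  rw [diag2_inv]
  ext i j
  fin_cases i <;> fin_cases j <;>
    simp [diag2_coe, transvection_coe, mul_apply, Fin.sum_univ_two, one_apply, single_apply, ha, sq,
      mul_comm, mul_left_comm, mul_assoc]

lemma diag2_mul_transvection_one_zero_mul_inv {a : F} (ha : a ≠ 0) (c : F) :
    diag2 a ha * transvection one_ne_zero c * (diag2 a ha)⁻¹ =
      transvection one_ne_zero (a⁻¹ ^ 2 * c) := by
  rw [diag2_inv]
  ext i j
  fin_cases i <;> fin_cases j <;>
    simp [diag2_coe, transvection_coe, mul_apply, Fin.sum_univ_two, one_apply, single_apply, ha, sq,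
      mul_comm, mul_left_comm, mul_assoc]

end Matrix.SpecialLinearGroup

local notation "SL2" => SpecialLinearGroup (Fin 2) E

open DiscreteVal SpecialLinearGroup

section Subgroups

variable (ν : DiscreteVal E) {π : E}

def slIntegralSubgroup : Subgroup SL2 := (SpecialLinearGroup.map ν.integers.subtype).range

/-- `U' = diag(1, π) U diag(1, π)⁻¹`. -/
def slConjSubgroup (hπ : π ≠ 0) : Subgroup SL2 :=
  (slIntegralSubgroup ν).comap (conjByDiagonal ![1, Units.mk0 π hπ])

variable {ν}

lemma coe_slIntegralSubgroup : (slIntegralSubgroup ν : Set SL2) = slIntegral ν :=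
  Set.ext fun g => mem_range_map_subtype_iff _ g

lemma coe_slConjSubgroup (hπ : π ≠ 0) : (slConjSubgroup ν hπ : Set SL2) = slConj ν π := by
  ext g
  rw [SetLike.mem_coe, slConjSubgroup, Subgroup.mem_comap, ← SetLike.mem_coe,
    coe_slIntegralSubgroup]
  simp [slIntegral, slConj, Fin.forall_fin_two, conjByDiagonal_apply, mem_ball_iff hπ, hπ,
    mul_comm _ π, and_assoc, and_comm]

lemma coe_slIntegralSubgroup_inf_slConjSubgroup (hπ : π ≠ 0) :
    ((slIntegralSubgroup ν ⊓ slConjSubgroup ν hπ : Subgroup SL2) : Set SL2) =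
      slIntegral ν ∩ slConj ν π := by
  rw [Subgroup.coe_inf, coe_slIntegralSubgroup, coe_slConjSubgroup]

lemma inv_mem_slIntegral_union_slConj (hπ : π ≠ 0) {h : SL2}
    (hh : h ∈ slIntegral ν ∪ slConj ν π) : h⁻¹ ∈ slIntegral ν ∪ slConj ν π := by
  rw [← coe_slIntegralSubgroup, ← coe_slConjSubgroup hπ] at hh ⊢
  exact hh.imp (inv_mem (x := h)) (inv_mem (x := h))

lemma transvection_mem_slIntegral {i j : Fin 2} (hij : i ≠ j) {c : E} (hc : c ∈ ν.O) :
    transvection hij c ∈ slIntegral ν := fun k l => by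
  rw [transvection_coe]
  refine ν.integers.add_mem ?_ ?_
  · rw [one_apply]; split_ifs; exacts [one_mem_O, zero_mem_O]
  · rw [single_apply]; split_ifs; exacts [hc, zero_mem_O]

lemma transvection_zero_one_mem_slConj (hπ : π ≠ 0) {c : E} (hc : π * c ∈ ν.O) :
    transvection zero_ne_one c ∈ slConj ν π := by
  simp [slConj, transvection_coe, mem_ball_iff hπ, hc, zero_mem_O, one_mem_O]

lemma transvection_one_zero_mem_slConj (hπ : π ≠ 0) {c : E} (hc : π⁻¹ * c ∈ ν.O) :
    transvection one_ne_zero c ∈ slConj ν π := by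
  simp [slConj, transvection_coe, mem_ball_iff hπ, hc, zero_mem_O, one_mem_O]

end Subgroups

section Generation

variable {ν : DiscreteVal E} {π : E}

/-- `diag2_decompose` writes `diag(π⁻¹, π)` as a product of transvections; those with an entry
`π⁻¹` or `-π` lie in `U'`, the others in `U`. -/
lemma diag2_inv_mem_closure (hπ : π ≠ 0) :
    diag2 π⁻¹ (inv_ne_zero hπ) ∈ Subgroup.closure (slIntegral ν ∪ slConj ν π) := by
  have hU {i j : Fin 2} (hij : i ≠ j) {c : E} (hc : c ∈ ν.O) :
      transvection hij c ∈ Subgroup.closure (slIntegral ν ∪ slConj ν π) :=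
    Subgroup.subset_closure (Or.inl (transvection_mem_slIntegral hij hc))
  have hU'₀₁ {c : E} (hc : π * c ∈ ν.O) :
      transvection zero_ne_one c ∈ Subgroup.closure (slIntegral ν ∪ slConj ν π) :=
    Subgroup.subset_closure (Or.inr (transvection_zero_one_mem_slConj hπ hc))
  have hU'₁₀ {c : E} (hc : π⁻¹ * c ∈ ν.O) :
      transvection one_ne_zero c ∈ Subgroup.closure (slIntegral ν ∪ slConj ν π) :=
    Subgroup.subset_closure (Or.inr (transvection_one_zero_mem_slConj hπ hc))
  have hm1 : (-1 : E) ∈ ν.O := ν.integers.neg_mem one_mem_O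
  rw [diag2_decompose, inv_inv]
  refine mul_mem (mul_mem (mul_mem (mul_mem (mul_mem ?_ ?_) ?_) (hU _ hm1)) (hU _ one_mem_O))
    (hU _ hm1)
  · exact hU'₀₁ (by rw [mul_inv_cancel₀ hπ]; exact one_mem_O)
  · exact hU'₁₀ (by rwa [mul_neg, inv_mul_cancel₀ hπ])
  · exact hU'₀₁ (by rw [mul_inv_cancel₀ hπ]; exact one_mem_O)

lemma transvection_mem_closure_of_sq_mul (hπ : π ≠ 0) {i j : Fin 2} (hij : i ≠ j) {c : E}
    (hc : transvection hij (π ^ 2 * c) ∈ Subgroup.closure (slIntegral ν ∪ slConj ν π)) :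
    transvection hij c ∈ Subgroup.closure (slIntegral ν ∪ slConj ν π) := by
  have hd := diag2_inv_mem_closure (ν := ν) hπ
  obtain ⟨rfl, rfl⟩ | ⟨rfl, rfl⟩ : i = 0 ∧ j = 1 ∨ i = 1 ∧ j = 0 := by
    fin_cases i <;> fin_cases j <;> simp at hij ⊢
  · have hconj := diag2_mul_transvection_zero_one_mul_inv (inv_ne_zero hπ) (π ^ 2 * c)
    rw [inv_pow, inv_mul_cancel_left₀ (pow_ne_zero 2 hπ)] at hconj
    rw [← hconj]
    exact mul_mem (mul_mem hd hc) (inv_mem hd)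
  · have hconj := diag2_mul_transvection_one_zero_mul_inv (inv_ne_zero hπ) c
    rw [inv_inv] at hconj
    rw [← hconj] at hc
    simpa [mul_assoc] using mul_mem (mul_mem (inv_mem hd) hc) hd

lemma transvection_mem_closure (hπ : ν.IsUniformizer π) {i j : Fin 2} (hij : i ≠ j) (c : E) :
    transvection hij c ∈ Subgroup.closure (slIntegral ν ∪ slConj ν π) := by
  obtain ⟨k, hk⟩ := hπ.exists_even_pow_mul_mem_O c
  induction k generalizing c with
  | zero =>
    rw [mul_zero, pow_zero, one_mul] at hk
    exact Subgroup.subset_closure (Or.inl (transvection_mem_slIntegral hij hk))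
  | succ k ih =>
    refine transvection_mem_closure_of_sq_mul hπ.1 hij (ih _ ?_)
    rwa [← mul_assoc, ← pow_add]

lemma closure_slIntegral_union_slConj_eq_top (hπ : ν.IsUniformizer π) :
    Subgroup.closure (slIntegral ν ∪ slConj ν π) = ⊤ :=
  eq_top_iff.2 fun g _ => SL2.transvection_induction (· ∈ Subgroup.closure _)
    (fun _ _ hij c => transvection_mem_closure hπ hij c) (fun _ _ => mul_mem) g

end Generation

section PingPong

variable {ν : DiscreteVal E} {π : E} (hπ : ν.IsUniformizer π)
include hπ

lemma toAddValuation_lower_left_eq_zero {u : SL2} (hu : u ∈ slIntegral ν)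
    (hu' : u ∉ slIntegral ν ∩ slConj ν π) : ν.toAddValuation (u 1 0) = 0 := by
  have hint : ∀ i j, 0 ≤ ν.toAddValuation (u i j) := fun i j => mem_O_iff.1 (hu i j)
  have hlt : ν.toAddValuation (u 1 0) < (1 : ℤ) := by
    refine not_le.1 fun h10 => hu' ⟨hu, hu 0 0, hu 1 1, ?_, hπ.mem_ball_iff_le.2 h10⟩
    exact hπ.mem_ball_iff_le.2 ((WithTop.coe_le_coe.2 (by norm_num)).trans (hint 0 1))
  have h0 := hint 1 0
  generalize ν.toAddValuation (u 1 0) = t at hlt h0 ⊢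
  induction t using WithTop.recTopCoe with
  | top => simp at hlt
  | coe k => norm_cast at *; omega

lemma toAddValuation_upper_right_eq_neg_one {u : SL2} (hu : u ∈ slConj ν π)
    (hu' : u ∉ slIntegral ν ∩ slConj ν π) : ν.toAddValuation (u 0 1) = (-1 : ℤ) := by
  obtain ⟨h00, h11, h01, h10⟩ := hu
  have hlt : ν.toAddValuation (u 0 1) < 0 := by
    refine not_le.1 fun h01' => hu' ⟨?_, h00, h11, h01, h10⟩
    show ∀ i j, u i j ∈ ν.O
    simp only [Fin.forall_fin_two]
    exact ⟨⟨h00, mem_O_iff.2 h01'⟩,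
      mem_O_iff.2 ((WithTop.coe_le_coe.2 (by norm_num)).trans (hπ.mem_ball_iff_le.1 h10)), h11⟩
  have hle := hπ.mem_ball_iff_le.1 h01
  generalize ν.toAddValuation (u 0 1) = t at hlt hle ⊢
  induction t using WithTop.recTopCoe with
  | top => simp at hlt
  | coe k => norm_cast at *; omega

lemma pingpong_slIntegral {u : SL2} (hu : u ∈ slIntegral ν)
    (hu' : u ∉ slIntegral ν ∩ slConj ν π) {x : Fin 2 → E} {k : ℤ}
    (hk : ν.toAddValuation (x 0) = k) (hx : ν.toAddValuation (x 0) < ν.toAddValuation (x 1)) :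
    ν.toAddValuation ((u • x) 1) = k ∧
      ν.toAddValuation ((u • x) 1) ≤ ν.toAddValuation ((u • x) 0) := by
  set w := ν.toAddValuation
  have hint : ∀ i j, 0 ≤ w (u i j) := fun i j => mem_O_iff.1 (hu i j)
  have h10 := toAddValuation_lower_left_eq_zero hπ hu hu'
  have hlt : w (u 1 0 * x 0) < w (u 1 1 * x 1) := by
    rw [AddValuation.map_mul, AddValuation.map_mul, h10, zero_add]
    exact hx.trans_le (le_add_of_nonneg_left (hint 1 1))
  have h1 : w ((u • x) 1) = k := by
    rw [smul_apply_fin_two, AddValuation.map_add_eq_of_lt_left _ hlt, AddValuation.map_mul, h10,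
      zero_add, hk]
  refine ⟨h1, h1 ▸ ?_⟩
  rw [smul_apply_fin_two, ← hk]
  refine AddValuation.map_le_add _ ?_ ?_ <;> rw [AddValuation.map_mul]
  · exact le_add_of_nonneg_left (hint 0 0)
  · exact hx.le.trans (le_add_of_nonneg_left (hint 0 1))

lemma pingpong_slConj {u : SL2} (hu : u ∈ slConj ν π)
    (hu' : u ∉ slIntegral ν ∩ slConj ν π) {x : Fin 2 → E} {k : ℤ}
    (hk : ν.toAddValuation (x 1) = k) (hx : ν.toAddValuation (x 1) ≤ ν.toAddValuation (x 0)) :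
    ν.toAddValuation ((u • x) 0) = (k - 1 : ℤ) ∧
      ν.toAddValuation ((u • x) 0) < ν.toAddValuation ((u • x) 1) := by
  set w := ν.toAddValuation
  have h01 := toAddValuation_upper_right_eq_neg_one hπ hu hu'
  obtain ⟨h00, h11, -, h10⟩ := hu
  have hx' : (k : WithTop ℤ) ≤ w (x 0) := hk ▸ hx
  have hlt : (k - 1 : ℤ) < (k : WithTop ℤ) := by norm_cast; omega
  have hk' : w (u 0 1 * x 1) = (k - 1 : ℤ) := by
    rw [AddValuation.map_mul, h01, hk]; norm_cast; omega
  have hlt' : w (u 0 1 * x 1) < w (u 0 0 * x 0) := by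
    rw [hk', AddValuation.map_mul]
    exact hlt.trans_le (hx'.trans (le_add_of_nonneg_left (mem_O_iff.1 h00)))
  have h0 : w ((u • x) 0) = (k - 1 : ℤ) := by
    rw [smul_apply_fin_two, AddValuation.map_add_eq_of_lt_right _ hlt', hk']
  refine ⟨h0, h0 ▸ ?_⟩
  rw [smul_apply_fin_two]
  refine AddValuation.map_lt_add _ ?_ ?_ <;> rw [AddValuation.map_mul]
  · refine hlt.trans_le (hx'.trans (le_add_of_nonneg_left ?_))
    exact (WithTop.coe_le_coe.2 (by norm_num)).trans (hπ.mem_ball_iff_le.1 h10)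
  · exact hlt.trans_le (hk ▸ le_add_of_nonneg_left (mem_O_iff.1 h11))

end PingPong

lemma Finsupp.exists_ne_mem_support_map_eq {α β M : Type*} [AddCommMonoid M] {p : α → β}
    {f : α →₀ M} (hf : f.mapDomain p = 0) {s : α} (hs : s ∈ f.support) :
    ∃ t ∈ f.support, t ≠ s ∧ p t = p s := by
  classical
  by_contra! h
  have hps : f.mapDomain p (p s) = f s := by
    rw [Finsupp.mapDomain, Finsupp.sum_apply, Finsupp.sum, Finset.sum_eq_single s]
    · exact Finsupp.single_eq_same
    · exact fun t ht hts => Finsupp.single_eq_of_ne (h t ht hts).symm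
    · exact fun hs' => absurd hs hs'
  exact Finsupp.mem_support_iff.1 hs (by rw [← hps, hf, Finsupp.zero_apply])

lemma cosetMk_eq_cosetMk_iff {H : Set SL2} (K : Subgroup SL2) (hK : (K : Set SL2) = H)
    {g g' : SL2} : cosetMk H g = cosetMk H g' ↔ ∃ h ∈ H, g' = h * g := by
  subst hK
  refine Quot.eq.trans (Equivalence.eqvGen_iff ⟨fun g => ⟨1, K.one_mem, (one_mul g).symm⟩, ?_, ?_⟩)
  · rintro _ _ ⟨h, hh, rfl⟩
    exact ⟨h⁻¹, K.inv_mem hh, by group⟩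
  · rintro _ _ _ ⟨h, hh, rfl⟩ ⟨k, hk, rfl⟩
    exact ⟨k * h, K.mul_mem hk hh, by group⟩

lemma exists_out_eq_mul_of_ne {H H₀ : Set SL2} (K : Subgroup SL2) (hK : (K : Set SL2) = H)
    (K₀ : Subgroup SL2) (hK₀ : (K₀ : Set SL2) = H₀) (p : CosetSpace H₀ → CosetSpace H)
    (hp : ∀ g, p (cosetMk H₀ g) = cosetMk H g) {s t : CosetSpace H₀} (hne : t ≠ s)
    (heq : p t = p s) : ∃ u ∈ H \ H₀, t.out = u * s.out := by
  rw [← Quot.out_eq t, ← Quot.out_eq s] at heq hne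
  obtain ⟨u, hu, hut⟩ := (cosetMk_eq_cosetMk_iff K hK).1
    ((hp _).symm.trans (heq.trans (hp _))).symm
  refine ⟨u, ⟨hu, fun hu₀ => hne ?_⟩, hut⟩
  exact ((cosetMk_eq_cosetMk_iff K₀ hK₀).2 ⟨u, hu₀, hut⟩).symm

lemma exists_mem_support_out_eq_mul_mul {ν : DiscreteVal E} {π : E} (hπ : π ≠ 0)
    {M : Type*} [AddCommMonoid M] {f : CosetSpace (slIntegral ν ∩ slConj ν π) →₀ M}
    (hU : f.mapDomain (projToU ν π) = 0) (hU' : f.mapDomain (projToU' ν π) = 0)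
    {s : CosetSpace (slIntegral ν ∩ slConj ν π)} (hs : s ∈ f.support) :
    ∃ s' ∈ f.support, ∃ u ∈ slIntegral ν \ (slIntegral ν ∩ slConj ν π),
      ∃ u' ∈ slConj ν π \ (slIntegral ν ∩ slConj ν π), s'.out = u' * u * s.out := by
  have hΓ₀ := coe_slIntegralSubgroup_inf_slConjSubgroup (ν := ν) hπ
  obtain ⟨t, ht, hts, hpt⟩ := Finsupp.exists_ne_mem_support_map_eq hU hs
  obtain ⟨s', hs', hst, hps⟩ := Finsupp.exists_ne_mem_support_map_eq hU' ht
  obtain ⟨u, hu, hut⟩ := exists_out_eq_mul_of_ne _ coe_slIntegralSubgroup _ hΓ₀ _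
    (fun _ => rfl) hts hpt
  obtain ⟨u', hu', hus⟩ := exists_out_eq_mul_of_ne _ (coe_slConjSubgroup hπ) _ hΓ₀ _
    (fun _ => rfl) hst hps
  exact ⟨s', hs', u, hu, u', hu', by rw [hus, hut, mul_assoc]⟩

theorem eq_zero_of_mapDomain_projToU_eq_zero {ν : DiscreteVal E} {π : E}
    (hπ : ν.IsUniformizer π) {M : Type*} [AddCommMonoid M]
    {f : CosetSpace (slIntegral ν ∩ slConj ν π) →₀ M}
    (hU : f.mapDomain (projToU ν π) = 0) (hU' : f.mapDomain (projToU' ν π) = 0) : f = 0 := by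
  have step (s : f.support) : ∃ s' : f.support,
      ∃ u ∈ slIntegral ν \ (slIntegral ν ∩ slConj ν π),
      ∃ u' ∈ slConj ν π \ (slIntegral ν ∩ slConj ν π), s'.1.out = u' * u * s.1.out := by
    obtain ⟨s', hs', h⟩ := exists_mem_support_out_eq_mul_mul hπ.1 hU hU' s.2
    exact ⟨⟨s', hs'⟩, h⟩
  choose next u hu u' hu' hnext using step
  by_contra hf
  obtain ⟨s₀, hs₀⟩ := Finsupp.support_nonempty_iff.2 hf
  let walk : ℕ → f.support := fun n => next^[n] ⟨s₀, hs₀⟩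
  let vec : f.support → Fin 2 → E := fun s => (s.1.out * s₀.out⁻¹) • Pi.single 0 1
  have hvec : ∀ n : ℕ, ν.toAddValuation (vec (walk n) 0) = (-n : ℤ) ∧
      ν.toAddValuation (vec (walk n) 0) < ν.toAddValuation (vec (walk n) 1) := by
    intro n
    induction n with
    | zero => simp [vec, walk]
    | succ n ih =>
      have hsucc : vec (walk (n + 1)) = u' (walk n) • u (walk n) • vec (walk n) := by
        simp only [vec, walk, Function.iterate_succ_apply', hnext, ← mul_smul, mul_assoc]
      obtain ⟨h1, h1'⟩ := pingpong_slIntegral hπ (hu _).1 (hu _).2 ih.1 ih.2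
      obtain ⟨h0, h0'⟩ := pingpong_slConj hπ (hu' _).1 (hu' _).2 h1 h1'
      rw [hsucc, h0]
      exact ⟨congrArg _ (by push_cast; ring), h0 ▸ h0'⟩
  refine not_injective_infinite_finite walk fun m n hmn => ?_
  have := (hvec m).1.symm.trans ((congrArg (fun s => ν.toAddValuation (vec s 0)) hmn).trans
    (hvec n).1)
  norm_cast at this
  omega

section ChainMaps

variable (Λ : Type) [CommRing Λ] (ν : DiscreteVal E) (π : E)

def deltaAddHom : (CosetSpace (slIntegral ν ∩ slConj ν π) →₀ Λ) →+
    (CosetSpace (slIntegral ν) →₀ Λ) × (CosetSpace (slConj ν π) →₀ Λ) :=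
  (Finsupp.mapDomain.addMonoidHom (projToU ν π)).prod
    (-Finsupp.mapDomain.addMonoidHom (M := Λ) (projToU' ν π))

def sigmaAddHom : (CosetSpace (slIntegral ν) →₀ Λ) × (CosetSpace (slConj ν π) →₀ Λ) →+ Λ :=
  (Finsupp.liftAddHom fun _ => AddMonoidHom.id Λ).coprod
    (Finsupp.liftAddHom fun _ => AddMonoidHom.id Λ)

variable {Λ ν π}

lemma deltaAddHom_apply (f : CosetSpace (slIntegral ν ∩ slConj ν π) →₀ Λ) :
    deltaAddHom Λ ν π f = deltaMap Λ ν π f := rfl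

lemma sigmaAddHom_apply
    (x : (CosetSpace (slIntegral ν) →₀ Λ) × (CosetSpace (slConj ν π) →₀ Λ)) :
    sigmaAddHom Λ ν π x = sigmaMap Λ ν π x := rfl

lemma deltaMap_single (g : SL2) (c : Λ) :
    deltaMap Λ ν π (Finsupp.single (cosetMk (slIntegral ν ∩ slConj ν π) g) c) =
      (Finsupp.single (cosetMk (slIntegral ν) g) c,
        -Finsupp.single (cosetMk (slConj ν π) g) c) := by
  simp only [deltaMap, Finsupp.mapDomain_single]
  rfl

lemma sigmaMap_deltaMap (f : CosetSpace (slIntegral ν ∩ slConj ν π) →₀ Λ) :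
    sigmaMap Λ ν π (deltaMap Λ ν π f) = 0 := by
  suffices (sigmaAddHom Λ ν π).comp (deltaAddHom Λ ν π) = 0 from DFunLike.congr_fun this f
  refine Finsupp.addHom_ext fun s c => ?_
  induction s using Quot.ind with
  | mk g =>
    change sigmaMap Λ ν π (deltaMap Λ ν π (Finsupp.single (cosetMk _ g) c)) = 0
    simp [deltaMap_single, sigmaMap, Finsupp.sum_neg_index]

lemma projToU_cosetTrans (g₀ : SL2) :
    projToU ν π ∘ cosetTrans (slIntegral ν ∩ slConj ν π) g₀ =
      cosetTrans (slIntegral ν) g₀ ∘ projToU ν π :=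
  funext fun s => Quot.inductionOn s fun _ => rfl

lemma projToU'_cosetTrans (g₀ : SL2) :
    projToU' ν π ∘ cosetTrans (slIntegral ν ∩ slConj ν π) g₀ =
      cosetTrans (slConj ν π) g₀ ∘ projToU' ν π :=
  funext fun s => Quot.inductionOn s fun _ => rfl

lemma deltaMap_transF (g₀ : SL2) (f : CosetSpace (slIntegral ν ∩ slConj ν π) →₀ Λ) :
    deltaMap Λ ν π (transF Λ _ g₀ f) =
      (transF Λ _ g₀ (deltaMap Λ ν π f).1, transF Λ _ g₀ (deltaMap Λ ν π f).2) := by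
  refine Prod.ext ?_ ?_
  · simp only [deltaMap, transF, ← Finsupp.mapDomain_comp, projToU_cosetTrans]
  · change -_ = Finsupp.mapDomain.addMonoidHom _ (-_)
    rw [map_neg, Finsupp.mapDomain.addMonoidHom_apply, ← Finsupp.mapDomain_comp,
      ← projToU'_cosetTrans, Finsupp.mapDomain_comp]
    rfl

lemma sigmaMap_transF (g₀ : SL2)
    (x : (CosetSpace (slIntegral ν) →₀ Λ) × (CosetSpace (slConj ν π) →₀ Λ)) :
    sigmaMap Λ ν π (transF Λ _ g₀ x.1, transF Λ _ g₀ x.2) = sigmaMap Λ ν π x := by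
  simp only [sigmaMap, transF,
    Finsupp.sum_mapDomain_index (h := fun _ a => a) (fun _ => rfl) (fun _ _ _ => rfl)]

end ChainMaps

section Exactness

variable {Λ : Type} [CommRing Λ] {ν : DiscreteVal E} {π : E}

lemma single_mul_sub_single_mem_range {h : SL2}
    (hh : h ∈ slIntegral ν ∪ slConj ν π) (g : SL2) (c : Λ) :
    (Finsupp.single (cosetMk (slIntegral ν) (h * g)) c -
      Finsupp.single (cosetMk (slIntegral ν) g) c, 0) ∈ (deltaAddHom Λ ν π).range := by
  rcases hh with hh | hh
  · rw [show cosetMk (slIntegral ν) (h * g) = cosetMk (slIntegral ν) g from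
      (Quot.sound ⟨h, hh, rfl⟩).symm, sub_self, Prod.mk_zero_zero]
    exact zero_mem _
  · refine ⟨Finsupp.single (cosetMk _ (h * g)) c - Finsupp.single (cosetMk _ g) c, ?_⟩
    rw [map_sub, deltaAddHom_apply, deltaAddHom_apply, deltaMap_single, deltaMap_single,
      show cosetMk (slConj ν π) (h * g) = cosetMk (slConj ν π) g from
        (Quot.sound ⟨h, hh, rfl⟩).symm, Prod.mk_sub_mk, neg_sub_neg, sub_self]

lemma single_sub_single_one_mem_range (hπ : ν.IsUniformizer π) (g : SL2) (c : Λ) :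
    (Finsupp.single (cosetMk (slIntegral ν) g) c -
      Finsupp.single (cosetMk (slIntegral ν) 1) c, 0) ∈ (deltaAddHom Λ ν π).range := by
  have hg : g ∈ Subgroup.closure (slIntegral ν ∪ slConj ν π) :=
    closure_slIntegral_union_slConj_eq_top hπ ▸ Subgroup.mem_top g
  induction hg using Subgroup.closure_induction_left with
  | one =>
    rw [sub_self, Prod.mk_zero_zero]
    exact zero_mem _
  | mul_left h hh g _ ih =>
    simpa using add_mem (single_mul_sub_single_mem_range hh g c) ih
  | inv_mul_cancel h hh g _ ih =>
    simpa using add_mem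
      (single_mul_sub_single_mem_range (inv_mem_slIntegral_union_slConj hπ.1 hh) g c) ih

lemma sub_single_sigmaMap_mem_range (hπ : ν.IsUniformizer π)
    (x : (CosetSpace (slIntegral ν) →₀ Λ) × (CosetSpace (slConj ν π) →₀ Λ)) :
    x - (Finsupp.single (cosetMk (slIntegral ν) 1) (sigmaMap Λ ν π x), 0) ∈
      (deltaAddHom Λ ν π).range := by
  let φ := AddMonoidHom.id _ - (AddMonoidHom.inl _ _).comp
    ((Finsupp.singleAddHom (cosetMk (slIntegral ν) 1)).comp (sigmaAddHom Λ ν π))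
  let S := (deltaAddHom Λ ν π).range.comap φ
  change x ∈ S
  rw [← Prod.fst_add_snd x]
  refine S.add_mem ?_ ?_
  · induction x.1 using Finsupp.induction_linear with
    | zero => exact S.zero_mem
    | add a b ha hb => simpa using S.add_mem ha hb
    | single s c =>
      induction s using Quot.ind with
      | mk g =>
        change φ (Finsupp.single (cosetMk _ g) c, 0) ∈ (deltaAddHom Λ ν π).range
        convert single_sub_single_one_mem_range hπ g c using 1
        simp [φ, sigmaAddHom_apply, sigmaMap]
  · induction x.2 using Finsupp.induction_linear with
    | zero => exact S.zero_mem
    | add a b ha hb => simpa using S.add_mem ha hb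
    | single s c =>
      induction s using Quot.ind with
      | mk g =>
        change φ (0, Finsupp.single (cosetMk _ g) c) ∈ (deltaAddHom Λ ν π).range
        convert sub_mem (single_sub_single_one_mem_range hπ g c)
          ⟨Finsupp.single (cosetMk (slIntegral ν ∩ slConj ν π) g) c, rfl⟩ using 1
        simp [φ, sigmaAddHom_apply, sigmaMap, deltaAddHom_apply, deltaMap_single]

lemma deltaMap_injective (hπ : ν.IsUniformizer π) : Function.Injective (deltaMap Λ ν π) :=
  (injective_iff_map_eq_zero (deltaAddHom Λ ν π)).2 fun _ hf =>
    eq_zero_of_mapDomain_projToU_eq_zero hπ (congrArg Prod.fst hf)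
      (neg_eq_zero.1 (congrArg Prod.snd hf))

end Exactness

theorem bruhatTits_chain_complex_exact
    (ν : DiscreteVal E) (π : E) (hπ : ν.IsUniformizer π)
    (Λ : Type) [CommRing Λ] :
    -- δ is given on indicator functions as described
    (∀ g : SpecialLinearGroup (Fin 2) E,
      deltaMap Λ ν π (Finsupp.single (cosetMk (slIntegral ν ∩ slConj ν π) g) (1 : Λ)) =
        (Finsupp.single (cosetMk (slIntegral ν) g) (1 : Λ),
          - Finsupp.single (cosetMk (slConj ν π) g) (1 : Λ))) ∧
    -- exactness at the left: δ is injective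
    Function.Injective (deltaMap Λ ν π) ∧
    -- exactness in the middle: ker Σ = im δ
    (∀ x : (CosetSpace (slIntegral ν) →₀ Λ) × (CosetSpace (slConj ν π) →₀ Λ),
      sigmaMap Λ ν π x = 0 ↔ ∃ f, deltaMap Λ ν π f = x) ∧
    -- exactness at the right: Σ is surjective
    Function.Surjective (sigmaMap Λ ν π) ∧
    -- δ is G-equivariant
    (∀ (g₀ : SpecialLinearGroup (Fin 2) E)
        (f : CosetSpace (slIntegral ν ∩ slConj ν π) →₀ Λ),
      deltaMap Λ ν π (transF Λ _ g₀ f) =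
        (transF Λ _ g₀ (deltaMap Λ ν π f).1, transF Λ _ g₀ (deltaMap Λ ν π f).2)) ∧
    -- Σ is G-equivariant (G acting trivially on Λ)
    (∀ (g₀ : SpecialLinearGroup (Fin 2) E)
        (x : (CosetSpace (slIntegral ν) →₀ Λ) × (CosetSpace (slConj ν π) →₀ Λ)),
      sigmaMap Λ ν π (transF Λ _ g₀ x.1, transF Λ _ g₀ x.2) = sigmaMap Λ ν π x) := by
  refine ⟨fun g => deltaMap_single g 1, deltaMap_injective hπ, fun x => ⟨fun hx => ?_, ?_⟩,
    fun c => ⟨(Finsupp.single (cosetMk (slIntegral ν) 1) c, 0), by simp [sigmaMap]⟩,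
    deltaMap_transF, sigmaMap_transF⟩
  · obtain ⟨f, hf⟩ := sub_single_sigmaMap_mem_range hπ x
    rw [hx, Finsupp.single_zero, Prod.mk_zero_zero, sub_zero] at hf
    exact ⟨f, hf⟩
  · rintro ⟨f, rfl⟩
    exact sigmaMap_deltaMap f

end Statement12
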